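/- arXiv:1706.02474 — 3 statements merged into one kernel-verified Lean document; each statement's English description precedes it below -/
import Mathlib

section
/- Let P be a finite set of points in the plane and suppose at least 4 points of P lie on the boundary of the smallest enclosing circle C(P). Then there exists a boundary point p ∈ P such that the smallest enclosing circle of P \ {p} still equals C(P). -/
noncomputable section

abbrev Plane := EuclideanSpace ℝ (Fin 2)

/-- `IsSEC P c ρ` : the closed disk of center `c` and radius `ρ` contains `P`
and has minimal radius among all closed disks containing `P`. -/
def IsSEC (P : Set Plane) (c : Plane) (ρ : ℝ) : Prop :=
  P ⊆ Metric.closedBall c ρ ∧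
    ∀ (c' : Plane) (ρ' : ℝ), P ⊆ Metric.closedBall c' ρ' → ρ ≤ ρ'

/-!
If the center `c` of the smallest enclosing circle were not in the convex hull of the boundary
points, a direction separating `c` from that hull would let us move the center slightly and
shrink the circle. So `c` lies in that hull, and by Carathéodory already in the hull of at most
three boundary points. A fourth boundary point can then be dropped: any disk containing points
of the circle whose hull contains `c` has radius at least `ρ`.
-/

open Metric RealInnerProductSpace Filter Topology

section InnerProductSpace

variable {E : Type*} [NormedAddCommGroup E] [InnerProductSpace ℝ E]

theorem norm_sub_sq_sub_norm_sub_sq (x c c' : E) :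
    ‖x - c'‖ ^ 2 - ‖x - c‖ ^ 2 = 2 * ⟪c - c', x⟫ + ‖c'‖ ^ 2 - ‖c‖ ^ 2 := by
  rw [norm_sub_sq_real, norm_sub_sq_real, inner_sub_left, real_inner_comm x c,
    real_inner_comm x c']
  ring

/-- The points `x` with `‖x - c'‖² - ‖x - c‖² ≤ ρ'² - ρ²` form a half-space containing `S`,
hence `c`. -/
theorem le_of_mem_convexHull_of_subset_sphere {S : Set E} {c c' : E} {ρ ρ' : ℝ}
    (hS : S ⊆ sphere c ρ) (hc : c ∈ convexHull ℝ S) (hS' : S ⊆ closedBall c' ρ') :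
    ρ ≤ ρ' := by
  obtain ⟨y, hy⟩ := convexHull_nonempty_iff.1 ⟨c, hc⟩
  have hρ' : 0 ≤ ρ' := dist_nonneg.trans (hS' hy)
  set K := (ρ' ^ 2 - ρ ^ 2 + ‖c‖ ^ 2 - ‖c'‖ ^ 2) / 2 with hK
  have hSH : S ⊆ {x | ⟪c - c', x⟫ ≤ K} := by
    intro x hx
    have hxc : ‖x - c‖ = ρ := mem_sphere_iff_norm.1 (hS hx)
    have hxc' : ‖x - c'‖ ^ 2 ≤ ρ' ^ 2 :=
      pow_le_pow_left₀ (norm_nonneg _) (mem_closedBall_iff_norm.1 (hS' hx)) 2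
    have := norm_sub_sq_sub_norm_sub_sq x c c'
    rw [hxc] at this
    show ⟪c - c', x⟫ ≤ K
    linarith
  have hcH : ⟪c - c', c⟫ ≤ K :=
    convexHull_min hSH (convex_halfSpace_le (innerₛₗ ℝ (c - c')).isLinear K) hc
  have := norm_sub_sq_sub_norm_sub_sq c c c'
  rw [sub_self, norm_zero] at this
  by_contra! hlt
  nlinarith [sq_nonneg ‖c - c'‖, mul_pos (sub_pos.2 hlt) (hρ'.trans_lt hlt)]

theorem exists_forall_inner_sub_pos_of_notMem [CompleteSpace E] {K : Set E}
    (hK : Convex ℝ K) (hKc : IsClosed K) {c : E} (hc : c ∉ K) :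
    ∃ v : E, ∀ y ∈ K, 0 < ⟪y - c, v⟫ := by
  obtain ⟨f, u, hfK, hfc⟩ := geometric_hahn_banach_closed_point hK hKc hc
  refine ⟨-(InnerProductSpace.toDual ℝ E).symm f, fun y hy => ?_⟩
  rw [inner_neg_right, real_inner_comm, inner_sub_right, InnerProductSpace.toDual_symm_apply,
    InnerProductSpace.toDual_symm_apply]
  linarith [hfK y hy]

theorem eventually_dist_add_smul_lt_of_dist_lt {x c : E} {ρ : ℝ} (hx : dist x c < ρ) (v : E) :
    ∀ᶠ t in 𝓝 (0 : ℝ), dist x (c + t • v) < ρ := by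
  have hcont : Continuous fun t : ℝ => dist x (c + t • v) := by fun_prop
  exact (hcont.tendsto' 0 (dist x c) (by simp)).eventually_lt_const hx

theorem eventually_dist_add_smul_lt {x c v : E} {ρ : ℝ} (hx : dist x c ≤ ρ)
    (hv : 0 < ⟪x - c, v⟫) : ∀ᶠ t in 𝓝[>] (0 : ℝ), dist x (c + t • v) < ρ := by
  filter_upwards [Ioo_mem_nhdsGT (show (0 : ℝ) < ⟪x - c, v⟫ / (‖v‖ ^ 2 + 1) by positivity)]
    with t ⟨ht0, ht⟩
  rw [lt_div_iff₀ (by positivity)] at ht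
  have hexp : ‖x - (c + t • v)‖ ^ 2 = ‖x - c‖ ^ 2 - 2 * t * ⟪x - c, v⟫ + t ^ 2 * ‖v‖ ^ 2 := by
    rw [← sub_sub, norm_sub_sq_real, inner_smul_right, norm_smul, Real.norm_of_nonneg ht0.le]
    ring
  have hsq : dist x (c + t • v) ^ 2 < ρ ^ 2 := by
    rw [dist_eq_norm, hexp, ← dist_eq_norm]
    nlinarith [dist_nonneg (x := x) (y := c)]
  exact lt_of_pow_lt_pow_left₀ 2 (dist_nonneg.trans hx) hsq

theorem mem_convexHull_boundary_of_minimal [FiniteDimensional ℝ E] {P : Set E} (hP : P.Finite)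
    {c : E} {ρ : ℝ} (hPc : P ⊆ closedBall c ρ)
    (hmin : ∀ c' ρ', P ⊆ closedBall c' ρ' → ρ ≤ ρ') :
    c ∈ convexHull ℝ {x ∈ P | dist x c = ρ} := by
  by_contra hc
  obtain ⟨v, hv⟩ := exists_forall_inner_sub_pos_of_notMem (convex_convexHull ℝ _)
    ((hP.subset (Set.sep_subset P _)).isClosed_convexHull (𝕜 := ℝ)) hc
  have hshift : ∀ᶠ t in 𝓝[>] (0 : ℝ), ∀ x ∈ P, dist x (c + t • v) < ρ := by
    refine hP.eventually_all.2 fun x hx => ?_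
    rcases (mem_closedBall.1 (hPc hx)).lt_or_eq with hlt | heq
    · exact nhdsWithin_le_nhds (eventually_dist_add_smul_lt_of_dist_lt hlt v)
    · exact eventually_dist_add_smul_lt (hPc hx) (hv x (subset_convexHull ℝ _ ⟨hx, heq⟩))
  obtain ⟨t, ht⟩ := hshift.exists
  obtain ⟨ρ', hρ', hPρ'⟩ := exists_lt_subset_ball hP.isClosed ht
  exact (hmin _ _ (hPρ'.trans ball_subset_closedBall)).not_gt hρ'

end InnerProductSpace

theorem exists_finset_card_le_finrank_succ_of_mem_convexHull {𝕜 E : Type*} [Field 𝕜]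
    [LinearOrder 𝕜] [IsStrictOrderedRing 𝕜] [AddCommGroup E] [Module 𝕜 E]
    [FiniteDimensional 𝕜 E] {s : Set E} {x : E} (hx : x ∈ convexHull 𝕜 s) :
    ∃ t : Finset E, ↑t ⊆ s ∧ t.card ≤ Module.finrank 𝕜 E + 1 ∧ x ∈ convexHull 𝕜 ↑t := by
  rw [convexHull_eq_union] at hx
  simp only [Set.mem_iUnion] at hx
  obtain ⟨t, hts, hind, hxt⟩ := hx
  refine ⟨t, hts, ?_, hxt⟩
  have := hind.card_le_finrank_succ
  rw [Fintype.card_coe] at this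
  exact this.trans (Nat.succ_le_succ (Submodule.finrank_le _))

theorem exists_noncritical_boundary_point (P : Set Plane) (hfin : P.Finite)
    (c : Plane) (ρ : ℝ) (hSEC : IsSEC P c ρ)
    (hbd : 4 ≤ {x ∈ P | dist x c = ρ}.ncard) :
    ∃ p ∈ P, dist p c = ρ ∧ IsSEC (P \ {p}) c ρ := by
  obtain ⟨hPc, hmin⟩ := hSEC
  obtain ⟨s, hsB, hs, hcs⟩ := exists_finset_card_le_finrank_succ_of_mem_convexHull
    (mem_convexHull_boundary_of_minimal hfin hPc hmin)
  rw [finrank_euclideanSpace_fin] at hs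
  have hcard : (s : Set Plane).ncard < {x ∈ P | dist x c = ρ}.ncard := by
    rw [Set.ncard_coe_finset]
    omega
  obtain ⟨p, hpB, hps⟩ := Set.exists_mem_notMem_of_ncard_lt_ncard hcard
  refine ⟨p, hpB.1, hpB.2, fun x hx => hPc hx.1, fun c' ρ' hP' => ?_⟩
  exact le_of_mem_convexHull_of_subset_sphere (fun x hx => (hsB hx).2) hcs
    fun x hx => hP' ⟨(hsB hx).1, fun hxp => hps (hxp ▸ hx)⟩
end
end

section
/- Let φ be an isometry of the Euclidean plane with a unique fixed point x (a nontrivial rotation). If φ maps a finite nonempty set P of points onto itself, then x = c(P), the center of the smallest enclosing circle of P. -/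
noncomputable section

/-! The smallest enclosing disk is unique: if two disks of the minimal radius `ρ` with distinct
centers contained `P`, then by Apollonius's theorem the disk about the midpoint of their centers
of radius `√(ρ² - (d/2)²)`, `d` the distance of the centers, would contain `P` too, contradicting
minimality. Hence every isometry mapping `P` onto itself fixes `c(P)`, and a rotation fixes only
its center. -/

section Apollonius

variable {V Q : Type*} [NormedAddCommGroup V] [InnerProductSpace ℝ V] [MetricSpace Q]
  [NormedAddTorsor V Q]

theorem dist_midpoint_sq_add_half_dist_sq_le {p c c' : Q} {ρ : ℝ}
    (hc : dist p c ≤ ρ) (hc' : dist p c' ≤ ρ) :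
    dist p (midpoint ℝ c c') ^ 2 + (dist c c' / 2) ^ 2 ≤ ρ ^ 2 := by
  have hsq : dist p c ^ 2 ≤ ρ ^ 2 := pow_le_pow_left₀ dist_nonneg hc 2
  have hsq' : dist p c' ^ 2 ≤ ρ ^ 2 := pow_le_pow_left₀ dist_nonneg hc' 2
  have := EuclideanGeometry.dist_sq_add_dist_sq_eq_two_mul_dist_midpoint_sq_add_half_dist_sq p c c'
  linarith

theorem subset_closedBall_midpoint {P : Set Q} {c c' : Q} {ρ : ℝ}
    (hc : P ⊆ Metric.closedBall c ρ) (hc' : P ⊆ Metric.closedBall c' ρ) :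
    P ⊆ Metric.closedBall (midpoint ℝ c c') √(ρ ^ 2 - (dist c c' / 2) ^ 2) := fun _ hp =>
  Real.le_sqrt_of_sq_le <| le_sub_iff_add_le.mpr <|
    dist_midpoint_sq_add_half_dist_sq_le (hc hp) (hc' hp)

end Apollonius

namespace IsSEC

variable {P : Set Plane} {c : Plane} {ρ : ℝ}

theorem nonempty (hSEC : IsSEC P c ρ) : P.Nonempty := by
  by_contra hP
  have := hSEC.2 c (ρ - 1) (by simp [Set.not_nonempty_iff_eq_empty.mp hP])
  linarith

theorem eq_of_subset_closedBall (hSEC : IsSEC P c ρ) {c' : Plane}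
    (hc' : P ⊆ Metric.closedBall c' ρ) : c' = c := by
  obtain ⟨p, hp⟩ := hSEC.nonempty
  have hmid := dist_midpoint_sq_add_half_dist_sq_le (hSEC.1 hp) (hc' hp)
  have hρ : 0 ≤ ρ := dist_nonneg.trans (hSEC.1 hp)
  have hle : ρ ≤ √(ρ ^ 2 - (dist c c' / 2) ^ 2) :=
    hSEC.2 _ _ (subset_closedBall_midpoint hSEC.1 hc')
  have hsq : ρ ^ 2 ≤ ρ ^ 2 - (dist c c' / 2) ^ 2 :=
    (Real.le_sqrt hρ (by nlinarith [sq_nonneg (dist p (midpoint ℝ c c'))])).mp hle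
  have hdist : dist c c' = 0 := by nlinarith [sq_nonneg (dist c c')]
  exact (dist_eq_zero.mp hdist).symm

theorem isometry_apply_eq (hSEC : IsSEC P c ρ) {φ : Plane ≃ᵢ Plane} (hφ : φ '' P = P) :
    φ c = c :=
  hSEC.eq_of_subset_closedBall <| by
    rw [← hφ, ← φ.image_closedBall]
    exact Set.image_mono hSEC.1

end IsSEC

theorem rotation_center_eq_sec_center_general (P : Set Plane)
    (φ : Plane ≃ᵢ Plane) (x : Plane)
    (huniq : ∀ y, φ y = y → y = x)
    (hφ : φ '' P = P)
    (c : Plane) (ρ : ℝ) (hSEC : IsSEC P c ρ) :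
    x = c :=
  (huniq c (hSEC.isometry_apply_eq hφ)).symm

theorem rotation_center_eq_sec_center (P : Set Plane) (hfin : P.Finite) (hne : P.Nonempty)
    (φ : Plane ≃ᵢ Plane) (x : Plane)
    (hfix : φ x = x) (huniq : ∀ y, φ y = y → y = x)
    (hφ : φ '' P = P)
    (c : Plane) (ρ : ℝ) (hSEC : IsSEC P c ρ) :
    x = c :=
  rotation_center_eq_sec_center_general P φ x huniq hφ c ρ hSEC
end
end

section
/- For every finite nonempty set P of points in the plane, the center of the smallest enclosing circle of P lies in the convex hull of P. -/
/-!
If `c` lay outside the convex hull `K` of `P`, let `c'` be the nearest point of `K` to `c`.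
The obtuse-angle characterisation of `c'` gives `|p - c'|² + |c - c'|² ≤ |p - c|² ≤ ρ²` for
every `p ∈ P`, so the disk around `c'` of radius `√(ρ² - |c - c'|²) < ρ` still contains `P`,
contradicting minimality.
-/

noncomputable section

section InnerProductSpace

variable {E : Type*} [NormedAddCommGroup E] [InnerProductSpace ℝ E]

open RealInnerProductSpace

theorem exists_mem_forall_dist_sq_add_dist_sq_le {K : Set E} (hne : K.Nonempty)
    (hcomplete : IsComplete K) (hconv : Convex ℝ K) (c : E) :
    ∃ c' ∈ K, ∀ p ∈ K, dist p c' ^ 2 + dist c c' ^ 2 ≤ dist p c ^ 2 := by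
  obtain ⟨c', hc'K, hc'min⟩ := exists_norm_eq_iInf_of_complete_convex hne hcomplete hconv c
  have hobtuse := (norm_eq_iInf_iff_real_inner_le_zero hconv hc'K).mp hc'min
  refine ⟨c', hc'K, fun p hp => ?_⟩
  have hexpand : ‖p - c‖ ^ 2 = ‖p - c'‖ ^ 2 - 2 * ⟪c - c', p - c'⟫ + ‖c - c'‖ ^ 2 := by
    rw [show p - c = (p - c') - (c - c') by abel, norm_sub_sq_real, real_inner_comm]
  simp only [dist_eq_norm]
  linarith [hobtuse p hp]

theorem exists_closedBall_lt_of_notMem_convexHull {P : Set E} (hfin : P.Finite)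
    (hne : P.Nonempty) {c : E} {ρ : ℝ} (hP : P ⊆ Metric.closedBall c ρ)
    (hc : c ∉ convexHull ℝ P) :
    ∃ c' : E, ∃ r < ρ, P ⊆ Metric.closedBall c' r := by
  obtain ⟨c', hc'K, hc'⟩ := exists_mem_forall_dist_sq_add_dist_sq_le
    (hne.mono (subset_convexHull ℝ P)) (hfin.isCompact_convexHull (𝕜 := ℝ)).isComplete
    (convex_convexHull ℝ P) c
  have hd : 0 < dist c c' := dist_pos.mpr fun h => hc (h ▸ hc'K)
  have hbound : ∀ p ∈ P, dist p c' ^ 2 ≤ ρ ^ 2 - dist c c' ^ 2 := fun p hp => by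
    have hpc : dist p c ≤ ρ := hP hp
    nlinarith [hc' p (subset_convexHull ℝ P hp), dist_nonneg (x := p) (y := c)]
  obtain ⟨p₀, hp₀⟩ := hne
  have hρ : 0 ≤ ρ := dist_nonneg.trans (hP hp₀)
  refine ⟨c', √(ρ ^ 2 - dist c c' ^ 2), ?_, fun p hp => ?_⟩
  · calc √(ρ ^ 2 - dist c c' ^ 2) < √(ρ ^ 2) :=
          Real.sqrt_lt_sqrt ((sq_nonneg _).trans (hbound p₀ hp₀)) (by nlinarith)
      _ = ρ := Real.sqrt_sq hρ
  · exact Real.le_sqrt_of_sq_le (hbound p hp)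

end InnerProductSpace

theorem sec_center_mem_convexHull (P : Set Plane) (hfin : P.Finite) (hne : P.Nonempty)
    (c : Plane) (ρ : ℝ) (hSEC : IsSEC P c ρ) :
    c ∈ convexHull ℝ P := by
  by_contra hc
  obtain ⟨c', r, hr, hP⟩ := exists_closedBall_lt_of_notMem_convexHull hfin hne hSEC.1 hc
  exact (hSEC.2 c' r hP).not_gt hr
end
end
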